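/- arXiv:2107.03198 — 6 statements merged into one kernel-verified Lean document; each statement's English description precedes it below -/
import Mathlib

section
/- Let V be a finite-dimensional vector space over a field K and let σ : V* → V be a skew-symmetric linear map (i.e. η(σξ) = −ξ(ση) for all ξ, η ∈ V*). For any subspace S ⊆ V, the annihilator of S + σ(S°) in V* equals σ⁻¹(S) ∩ S°, where S° ⊆ V* denotes the annihilator of S. -/
/-- For a skew-symmetric linear map `σ : V* → V` on a finite-dimensional
vector space `V` and a subspace `S ⊆ V`, the annihilator of `S + σ(S°)` equals
`σ⁻¹(S) ∩ S°`. -/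
theorem stmt0 (K V : Type*) [Field K] [AddCommGroup V] [Module K V] [FiniteDimensional K V]
    (σ : Module.Dual K V →ₗ[K] V)
    (hskew : ∀ ξ η : Module.Dual K V, η (σ ξ) = -(ξ (σ η)))
    (S : Submodule K V) :
    (S ⊔ Submodule.map σ S.dualAnnihilator).dualAnnihilator =
      Submodule.comap σ S ⊓ S.dualAnnihilator := by
  ext ξ
  rw [Submodule.dualAnnihilator_sup_eq]
  simp only [Submodule.mem_inf, Submodule.mem_comap, Submodule.mem_dualAnnihilator,
    Submodule.mem_map]
  constructor
  · rintro ⟨h1, h2⟩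
    refine ⟨?_, h1⟩
    rw [← Subspace.forall_mem_dualAnnihilator_apply_eq_zero_iff]
    intro η hη
    rw [hskew, h2 (σ η) ⟨η, (Submodule.mem_dualAnnihilator η).mp hη, rfl⟩, neg_zero]
  · rintro ⟨h1, h2⟩
    refine ⟨h2, ?_⟩
    rintro _ ⟨η, hη, rfl⟩
    rw [← neg_eq_zero, ← hskew]
    rw [← Subspace.forall_mem_dualAnnihilator_apply_eq_zero_iff] at h1
    exact h1 η ((Submodule.mem_dualAnnihilator η).mpr hη)
end

section
/- Let V be a finite-dimensional vector space over a field K, σ : V* → V a skew-symmetric linear map, and S ⊆ V a subspace. Then the annihilator in V* of the subspace S ∩ σ(S°) equals S° + σ⁻¹(S). -/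
/-- For a skew-symmetric linear map `σ : V* → V` on a finite-dimensional
vector space `V` and a subspace `S ⊆ V`, the annihilator of `S ∩ σ(S°)` equals
`S° + σ⁻¹(S)`. -/
theorem stmt1 (K V : Type*) [Field K] [AddCommGroup V] [Module K V] [FiniteDimensional K V]
    (σ : Module.Dual K V →ₗ[K] V)
    (hskew : ∀ ξ η : Module.Dual K V, η (σ ξ) = -(ξ (σ η)))
    (S : Submodule K V) :
    (S ⊓ Submodule.map σ S.dualAnnihilator).dualAnnihilator =
      S.dualAnnihilator ⊔ Submodule.comap σ S := by
  rw [Subspace.dualAnnihilator_inf_eq]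
  congr 1
  ext ξ
  have hS : S.dualAnnihilator.dualCoannihilator = S :=
    Subspace.dualAnnihilator_dualCoannihilator_eq
  constructor
  · intro hξ
    simp only [Submodule.mem_comap]
    rw [← hS, Submodule.mem_dualCoannihilator]
    intro η hη
    rw [Submodule.mem_dualAnnihilator] at hξ
    have := hξ (σ η) ⟨η, hη, rfl⟩
    rw [hskew η ξ] at this
    exact neg_eq_zero.mp this
  · intro hξ
    rw [Submodule.mem_dualAnnihilator]
    rintro _ ⟨η, hη, rfl⟩
    rw [hskew η ξ, neg_eq_zero]
    exact (Submodule.mem_dualAnnihilator η).mp hη (σ ξ) hξ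
end

section
/- Let (V, ω) be a finite-dimensional symplectic vector space with τ = ω⁻¹ : V* → V, let μ : V → W be a surjective linear map, and set σ := μ ∘ τ ∘ μ* : W* → W. For a subspace S ⊆ W, put N := μ⁻¹(S). Then N ∩ τ(N°) = { τ(μ*ξ) : ξ ∈ S°, σξ ∈ S }. -/
/-- For a linear Poisson map `μ` from a symplectic vector space `(V, ω)`
(with `τ = ω⁻¹` and `σ = μ ∘ τ ∘ μ*`) and a subspace `S ⊆ W` with `N = μ⁻¹(S)`, one has
`N ∩ τ(N°) = { τ(μ*ξ) : ξ ∈ S°, σξ ∈ S }`. -/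
theorem stmt3 (K V W : Type*) [Field K] [AddCommGroup V] [Module K V] [FiniteDimensional K V]
    [AddCommGroup W] [Module K W] [FiniteDimensional K W]
    (ω : V ≃ₗ[K] Module.Dual K V)
    (hskew : ∀ u v : V, ω u v = -(ω v u))
    (μ : V →ₗ[K] W) (hμ : Function.Surjective μ)
    (S : Submodule K W) (N : Submodule K V) (hN : N = Submodule.comap μ S) :
    ((N ⊓ Submodule.map ω.symm.toLinearMap N.dualAnnihilator : Submodule K V) : Set V) =
      {v : V | ∃ ξ ∈ S.dualAnnihilator,
        μ (ω.symm (μ.dualMap ξ)) ∈ S ∧ v = ω.symm (μ.dualMap ξ)} := by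
  ext v
  simp only [SetLike.mem_coe, Submodule.mem_inf, Submodule.mem_map, Set.mem_setOf_eq,
    Submodule.mem_dualAnnihilator, LinearEquiv.coe_coe, hN, Submodule.mem_comap]
  constructor
  · rintro ⟨hvN, η, hηN, rfl⟩
    have hker : η ∈ (LinearMap.ker μ).dualAnnihilator := by
      rw [Submodule.mem_dualAnnihilator]
      intro u hu
      exact hηN u (by simp [LinearMap.mem_ker.mp hu])
    rw [← LinearMap.range_dualMap_eq_dualAnnihilator_ker] at hker
    obtain ⟨ξ, rfl⟩ := hker
    refine ⟨ξ, ?_, hvN, rfl⟩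
    intro s hs
    obtain ⟨u, rfl⟩ := hμ s
    exact hηN u hs
  · rintro ⟨ξ, hξ, hσ, rfl⟩
    exact ⟨hσ, μ.dualMap ξ, fun u hu => hξ (μ u) hu, rfl⟩
end

section
/- Let W be a finite-dimensional vector space over a field K, σ : W* → W a skew-symmetric linear map, and S ⊆ W a subspace such that W = S ⊕ σ(S°). Then the restriction map σ⁻¹(S) → S*, ξ ↦ ξ|_S, is a linear isomorphism. -/
/-- If `σ : W* → W` is skew-symmetric and `W = S ⊕ σ(S°)`, then the
restriction map `σ⁻¹(S) → S*`, `ξ ↦ ξ|_S`, is a linear isomorphism. -/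
theorem stmt5 (K W : Type*) [Field K] [AddCommGroup W] [Module K W] [FiniteDimensional K W]
    (σ : Module.Dual K W →ₗ[K] W)
    (hskew : ∀ ξ η : Module.Dual K W, η (σ ξ) = -(ξ (σ η)))
    (S : Submodule K W)
    (hcompl : IsCompl S (Submodule.map σ S.dualAnnihilator)) :
    Function.Bijective
      ((S.subtype.dualMap).comp (Submodule.comap σ S).subtype) := by
  constructor
  · rw [injective_iff_map_eq_zero]
    intro ξ hξ
    have hann : (ξ : Module.Dual K W) ∈ S.dualAnnihilator := by
      rw [Submodule.mem_dualAnnihilator]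
      intro w hw
      simpa using LinearMap.congr_fun hξ ⟨w, hw⟩
    have hσξ : σ (ξ : Module.Dual K W) = 0 := by
      have h1 : σ (ξ : Module.Dual K W) ∈ S := ξ.2
      have h2 : σ (ξ : Module.Dual K W) ∈ Submodule.map σ S.dualAnnihilator :=
        ⟨ξ, hann, rfl⟩
      exact (Submodule.disjoint_def.mp hcompl.disjoint) _ h1 h2
    have : (ξ : Module.Dual K W) = 0 := by
      ext w
      have hw : w ∈ S ⊔ Submodule.map σ S.dualAnnihilator := by
        rw [hcompl.codisjoint.eq_top]; trivial
      obtain ⟨s, hs, t, ht, rfl⟩ := Submodule.mem_sup.mp hw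
      obtain ⟨η, hη, rfl⟩ := ht
      rw [Submodule.mem_dualAnnihilator] at hann
      have h1 : (ξ : Module.Dual K W) s = 0 := hann s hs
      have h2 : (ξ : Module.Dual K W) (σ η) = 0 := by
        rw [hskew η ξ, hσξ, map_zero, neg_zero]
      simp [h1, h2]
    exact Subtype.ext this
  · intro f
    set ξ0 : Module.Dual K W :=
      f.comp (S.projectionOnto _ hcompl) with hξ0
    have hw : σ ξ0 ∈ S ⊔ Submodule.map σ S.dualAnnihilator := by
      rw [hcompl.codisjoint.eq_top]; trivial
    obtain ⟨s, hs, t, ht, hsum⟩ := Submodule.mem_sup.mp hw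
    obtain ⟨η, hη, rfl⟩ := ht
    refine ⟨⟨ξ0 - η, ?_⟩, ?_⟩
    · show σ (ξ0 - η) ∈ S
      rw [map_sub]
      have : σ ξ0 - σ η = s := by rw [← hsum]; abel
      rw [this]; exact hs
    · ext x
      simp only [SetLike.mem_coe, Submodule.mem_dualAnnihilator] at hη
      have hη0 : η (x : W) = 0 := hη x x.2
      simp [hξ0, hη0, Submodule.projectionOnto_apply_left]
end

section
/- Let g be a finite-dimensional Lie algebra over a field of characteristic zero such that every finite-dimensional representation of sl₂ is completely reducible (e.g. the ground field is ℂ), and let (e, h, f) be an sl₂-triple in g (i.e. [h,e] = 2e, [h,f] = −2f, [e,f] = h). Then g decomposes as the internal direct sum g = ker(ad f) ⊕ image(ad e), i.e. g = g_f ⊕ [e, g]. -/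
open Module LinearMap Submodule Module.End

universe u v

section helpers

variable {k : Type u} [Field k] {V : Type v} [AddCommGroup V] [Module k V]

lemma sl2aux_shift (H G : Module.End k V) (μ c : k)
    (h : H * G = G * H + c • G) :
    (H - (μ + c) • 1) * G = G * (H - μ • 1) := by
  rw [sub_mul, mul_sub, h, smul_mul_assoc, mul_smul_comm, one_mul, mul_one, add_smul]
  abel

lemma sl2aux_shift_pow (H G : Module.End k V) (μ c : k)
    (h : H * G = G * H + c • G) (n : ℕ) :
    (H - (μ + c) • 1) ^ n * G = G * (H - μ • 1) ^ n := by
  induction n with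
  | zero => simp
  | succ n ih =>
      rw [pow_succ, pow_succ, mul_assoc, sl2aux_shift H G μ c h, ← mul_assoc, ih, mul_assoc]

lemma sl2aux_mapsTo (H G : Module.End k V) (μ c : k)
    (h : H * G = G * H + c • G) {v : V} (hv : v ∈ H.maxGenEigenspace μ) :
    G v ∈ H.maxGenEigenspace (μ + c) := by
  rw [Module.End.mem_maxGenEigenspace] at hv ⊢
  obtain ⟨n, hn⟩ := hv
  refine ⟨n, ?_⟩
  rw [← Module.End.mul_apply, sl2aux_shift_pow H G μ c h, Module.End.mul_apply, hn, map_zero]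

lemma sl2aux_eigize (H : Module.End k V) (μ : k) {v : V} (h0 : v ≠ 0)
    (hv : ∃ N : ℕ, ((H - μ • 1) ^ N) v = 0) :
    ∃ j : ℕ, ((H - μ • 1) ^ j) v ≠ 0 ∧ (H - μ • 1) (((H - μ • 1) ^ j) v) = 0 := by
  classical
  have hN := Nat.find_spec hv
  have hNpos : Nat.find hv ≠ 0 := by
    intro h'
    rw [h', pow_zero] at hN
    exact h0 (by simpa using hN)
  obtain ⟨j, hj⟩ := Nat.exists_eq_succ_of_ne_zero hNpos
  refine ⟨j, Nat.find_min hv (by omega), ?_⟩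
  rw [← Module.End.mul_apply, ← pow_succ']; rw [Nat.succ_eq_add_one] at hj; rw [← hj]
  exact hN

end helpers

lemma sl2aux_core {k : Type u} [Field k] [IsAlgClosed k] [CharZero k] :
    ∀ (n : ℕ) (V : Type v) [AddCommGroup V] [Module k V] [FiniteDimensional k V],
      finrank k V = n → ∀ (E F H : Module.End k V),
      H * E - E * H = E + E → H * F - F * H = -(F + F) → E * F - F * E = H →
      ∀ z : V, F z = 0 → z ∈ LinearMap.range E → z = 0 := by
  intro n
  induction n using Nat.strong_induction_on with
  | _ n ih =>
  intro V _ _ _ hdim E F H hE hF hH z' hz'F hz'E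
  by_contra hz'0
  classical
  -- rearranged relations
  have hHE : H * E = E * H + (2:k) • E := by
    have h1 := eq_add_of_sub_eq hE; rw [h1, two_smul]; abel
  have hHF : H * F = F * H + (-2:k) • F := by
    have h1 := eq_add_of_sub_eq hF; rw [h1, neg_smul, two_smul]; abel
  have hFH : F * H = H * F + (2:k) • F := by rw [hHF]; rw [neg_smul, two_smul]; abel
  -- the submodule D = ker F ⊓ range E, H-invariant
  set D : Submodule k V := LinearMap.ker F ⊓ LinearMap.range E with hDdef
  have hDH : ∀ x ∈ D, H x ∈ D := by
    intro x hx
    obtain ⟨hx1, hx2⟩ := Submodule.mem_inf.mp hx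
    refine Submodule.mem_inf.mpr ⟨?_, ?_⟩
    · have h3 : F (H x) = H (F x) + (2:k) • F x := by
        have := congrArg (fun (L : Module.End k V) => L x) hFH
        simpa using this
      rw [LinearMap.mem_ker] at hx1 ⊢
      rw [h3, hx1, map_zero, smul_zero, add_zero]
    · obtain ⟨u, rfl⟩ := hx2
      refine ⟨H u + (2:k) • u, ?_⟩
      have := congrArg (fun (L : Module.End k V) => L u) hHE
      simpa using this.symm
  have hz'D : z' ∈ D := ⟨LinearMap.mem_ker.mpr hz'F, hz'E⟩
  -- decomposition of D along generalized eigenspaces of H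
  have hT : ⨆ μ, H.maxGenEigenspace μ = ⊤ := Module.End.iSup_maxGenEigenspace_eq_top H
  have hDdec : D = ⨆ μ, D ⊓ H.genEigenspace μ ⊤ :=
    Submodule.eq_iSup_inf_genEigenspace ⊤ hDH hT
  have hex : ∃ μ, D ⊓ H.genEigenspace μ ⊤ ≠ ⊥ := by
    by_contra hno
    push_neg at hno
    have : D = ⊥ := by rw [hDdec]; simp [hno]
    rw [this] at hz'D
    exact hz'0 (by simpa using hz'D)
  obtain ⟨l0, hl0⟩ := hex
  obtain ⟨z₁, hz₁, hz₁0⟩ := Submodule.ne_bot_iff _ |>.mp hl0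
  have hz₁D : z₁ ∈ D := hz₁.1
  have hz₁P : ∃ N : ℕ, ((H - l0 • 1) ^ N) z₁ = 0 :=
    (Module.End.mem_maxGenEigenspace H l0 z₁).mp hz₁.2
  obtain ⟨j, hj0, hjeig⟩ := sl2aux_eigize H l0 hz₁0 hz₁P
  set z : V := ((H - l0 • 1) ^ j) z₁ with hzdef
  have hzD : z ∈ D := by
    have step : ∀ x ∈ D, (H - l0 • 1) x ∈ D := by
      intro x hx
      have : (H - l0 • 1) x = H x - l0 • x := by simp
      rw [this]
      exact D.sub_mem (hDH x hx) (D.smul_mem _ hx)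
    have : ∀ (m : ℕ), ∀ x ∈ D, ((H - l0 • 1) ^ m) x ∈ D := by
      intro m
      induction m with
      | zero => intro x hx; simpa using hx
      | succ m ihm =>
          intro x hx
          rw [pow_succ, Module.End.mul_apply]
          exact ihm _ (step x hx)
    exact this j z₁ hz₁D
  have hzH : H z = l0 • z := by
    have := hjeig
    rw [LinearMap.sub_apply, LinearMap.smul_apply, Module.End.one_apply, sub_eq_zero] at this
    exact this
  have hz0 : z ≠ 0 := hj0
  have hzker : F z = 0 := LinearMap.mem_ker.mp hzD.1
  have hzP : z ∈ H.maxGenEigenspace l0 :=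
    (Module.End.mem_maxGenEigenspace H l0 z).mpr ⟨1, by simpa using hjeig⟩
  -- extract x ∈ P (l0 - 2) with E x = z
  obtain ⟨u, hu⟩ := hzD.2
  have hu' : u ∈ ⨆ μ, H.maxGenEigenspace μ := by rw [hT]; trivial
  rw [Submodule.mem_iSup_iff_exists_finsupp] at hu'
  obtain ⟨c, hc, hcsum⟩ := hu'
  set x : V := c (l0 - 2) with hxdef
  have hzsum : z = ∑ μ ∈ c.support, E (c μ) := by
    rw [← hu, ← hcsum, Finsupp.sum, map_sum]
  have hbiSup : ∀ μ : k, μ ≠ l0 - 2 → E (c μ) ∈ ⨆ ν ∈ {ν : k | ν ≠ l0}, H.maxGenEigenspace ν := by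
    intro μ hμ
    have h2 : E (c μ) ∈ H.maxGenEigenspace (μ + 2) := sl2aux_mapsTo H E μ 2 hHE (hc μ)
    have hne : (μ + 2) ∈ {ν : k | ν ≠ l0} := by
      simp only [Set.mem_setOf_eq]
      intro hcontra
      apply hμ
      rw [eq_sub_iff_add_eq]
      exact hcontra
    exact le_biSup (fun ν => H.maxGenEigenspace ν) hne h2
  have hEx : E x = z := by
    have hxP : E x ∈ H.maxGenEigenspace (l0 - 2 + 2) :=
      sl2aux_mapsTo H E (l0 - 2) 2 hHE (hc (l0 - 2))
    rw [sub_add_cancel] at hxP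
    have hdiff : z - E x ∈ H.maxGenEigenspace l0 := sub_mem hzP hxP
    have hdiff2 : z - E x ∈ ⨆ ν ∈ {ν : k | ν ≠ l0}, H.maxGenEigenspace ν := by
      by_cases hmem : (l0 - 2) ∈ c.support
      · have heq : z - E x = ∑ μ ∈ c.support.erase (l0 - 2), E (c μ) := by
          rw [hzsum, ← Finset.sum_erase_add _ _ hmem, add_sub_cancel_right]
        rw [heq]
        apply Submodule.sum_mem
        intro μ hμ
        exact hbiSup μ (Finset.mem_erase.mp hμ).1
      · have hx0 : x = 0 := Finsupp.notMem_support_iff.mp hmem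
        rw [hx0, map_zero, sub_zero, hzsum]
        apply Submodule.sum_mem
        intro μ hμ
        exact hbiSup μ (ne_of_mem_of_not_mem hμ hmem)
    have hdisj := (Module.End.independent_maxGenEigenspace H).disjoint_biSup
      (x := l0) (y := {ν : k | ν ≠ l0}) (by simp)
    have hzero := Submodule.disjoint_def.mp hdisj _ hdiff hdiff2
    exact (sub_eq_zero.mp hzero).symm
  have hx0 : x ≠ 0 := by
    intro hx
    rw [hx, map_zero] at hEx
    exact hz0 hEx.symm
  have hxP : x ∈ H.maxGenEigenspace (l0 - 2) := hc _
  -- eigenvector-producing helper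
  have eigvec : ∀ (μ : k), H.maxGenEigenspace μ ≠ ⊥ → ∃ w : V, w ≠ 0 ∧ H w = μ • w := by
    intro μ hμ
    obtain ⟨w0, hw0, hw00⟩ := Submodule.ne_bot_iff _ |>.mp hμ
    obtain ⟨j', hj'0, hj'e⟩ :=
      sl2aux_eigize H μ hw00 ((Module.End.mem_maxGenEigenspace H μ w0).mp hw0)
    refine ⟨_, hj'0, ?_⟩
    rw [LinearMap.sub_apply, LinearMap.smul_apply, Module.End.one_apply, sub_eq_zero] at hj'e
    exact hj'e
  -- the weight chain below l0 - 2
  set μi : ℕ → k := fun i => l0 - 2 - 2 * i with hμidef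
  have hμinj : Function.Injective μi := by
    intro a b hab
    simp only [hμidef] at hab
    have h2 : ((a:ℕ) : k) = ((b:ℕ) : k) := by
      have h3 : (2:k) * a = 2 * b := by linear_combination -hab
      exact mul_left_cancel₀ two_ne_zero h3
    exact Nat.cast_injective h2
  set T : Set ℕ := {i : ℕ | H.maxGenEigenspace (μi i) ≠ ⊥} with hTdef
  have hT0 : 0 ∈ T := by
    have hxP' : x ∈ H.maxGenEigenspace (μi 0) := by
      have : μi 0 = l0 - 2 := by simp [hμidef]
      rw [this]; exact hxP
    exact Submodule.ne_bot_iff _ |>.mpr ⟨x, hxP', hx0⟩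
  have hTfin : T.Finite := by
    have hch : ∀ i : T, ∃ w : V, w ≠ 0 ∧ H w = μi i • w := fun ⟨i, hi⟩ => eigvec _ hi
    choose w hw0 hweig using hch
    have hli : LinearIndependent k w :=
      Module.End.eigenvectors_linearIndependent' H (fun i : T => μi i)
        (hμinj.comp Subtype.val_injective) w
        (fun i => Module.End.hasEigenvector_iff.mpr
          ⟨Module.End.mem_eigenspace_iff.mpr (hweig i), hw0 i⟩)
    exact Set.finite_coe_iff.mp hli.finite
  set K : ℕ := sSup T with hKdef
  have hKmem : K ∈ T := Nat.sSup_mem ⟨0, hT0⟩ hTfin.bddAbove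
  have hK1 : (K+1) ∉ T := by
    intro hmem
    have := le_csSup hTfin.bddAbove hmem
    omega
  have hPbot : H.maxGenEigenspace (μi (K+1)) = ⊥ := by
    by_contra hcon2
    exact hK1 hcon2
  obtain ⟨u', hu'0, hu'eig⟩ := eigvec (μi K) hKmem
  have hu'P : u' ∈ H.maxGenEigenspace (μi K) :=
    (Module.End.mem_maxGenEigenspace H _ u').mpr ⟨1, by simp [pow_one, hu'eig]⟩
  have hFu' : F u' = 0 := by
    have h2 : F u' ∈ H.maxGenEigenspace (μi K + (-2)) := sl2aux_mapsTo H F (μi K) (-2) hHF hu'P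
    have heq : μi K + (-2:k) = μi (K+1) := by simp only [hμidef]; push_cast; ring
    rw [heq, hPbot] at h2
    simpa using h2
  -- the string g i = E^i u'
  set g : ℕ → V := fun i => (E ^ i) u' with hgdef
  have hg0 : g 0 = u' := by simp [hgdef]
  have hgsucc : ∀ i, g (i+1) = E (g i) := by
    intro i; simp [hgdef, pow_succ', Module.End.mul_apply]
  have hgH : ∀ i : ℕ, H (g i) = (μi K + 2 * i) • g i := by
    intro i
    induction i with
    | zero => rw [hg0]; simpa using hu'eig
    | succ i ihg =>
        rw [hgsucc]
        have happ := congrArg (fun (L : Module.End k V) => L (g i)) hHE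
        simp only [Module.End.mul_apply, LinearMap.add_apply, LinearMap.smul_apply] at happ
        rw [happ, ihg, map_smul, ← hgsucc, ← add_smul]
        congr 1
        push_cast
        ring
  have hFE : F * E = E * F - H := by rw [← hH]; abel
  have hgF : ∀ i : ℕ, F (g (i+1)) = (-((i:k)+1) * (μi K + i)) • g i := by
    intro i
    induction i with
    | zero =>
        rw [hgsucc, hg0]
        have happ := congrArg (fun (L : Module.End k V) => L u') hFE
        simp only [Module.End.mul_apply, LinearMap.sub_apply] at happ
        rw [happ, hFu', map_zero, hu'eig, zero_sub]
        push_cast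
        rw [← neg_smul]
        congr 1
        ring
    | succ i ihg =>
        rw [hgsucc (i+1)]
        have happ := congrArg (fun (L : Module.End k V) => L (g (i+1))) hFE
        simp only [Module.End.mul_apply, LinearMap.sub_apply] at happ
        rw [happ, ihg, map_smul, ← hgsucc, hgH (i+1), ← sub_smul]
        congr 1
        push_cast
        ring
  have hstop : ∃ i, g i = 0 := by
    by_contra hall
    push_neg at hall
    have hinj2 : Function.Injective (fun i : ℕ => μi K + 2 * (i:k)) := by
      intro a b hab
      simp only at hab
      have h3 : (2:k) * a = 2 * b := by linear_combination hab
      exact Nat.cast_injective (mul_left_cancel₀ two_ne_zero h3)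
    have hli : LinearIndependent k g :=
      Module.End.eigenvectors_linearIndependent' H (fun i : ℕ => μi K + 2 * (i:k)) hinj2 g
        (fun i => Module.End.hasEigenvector_iff.mpr
          ⟨Module.End.mem_eigenspace_iff.mpr (hgH i), hall i⟩)
    have : Finite ℕ := hli.finite
    exact not_finite ℕ
  classical
  have hi0spec := Nat.find_spec hstop
  have hi0pos : Nat.find hstop ≠ 0 := by
    intro hcon2
    rw [hcon2, hg0] at hi0spec
    exact hu'0 hi0spec
  obtain ⟨m', hm'⟩ := Nat.exists_eq_succ_of_ne_zero hi0pos
  have hgm1 : g (m'+1) = 0 := by rw [← Nat.succ_eq_add_one, ← hm']; exact hi0spec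
  have hglt : ∀ i ≤ m', g i ≠ 0 := fun i hi => Nat.find_min hstop (by omega)
  have hμK : μi K = -(m' : k) := by
    have h1 : (-((m':k)+1) * (μi K + m')) • g m' = 0 := by
      rw [← hgF m', hgm1, map_zero]
    rcases smul_eq_zero.mp h1 with h2 | h2
    · rcases mul_eq_zero.mp h2 with h3 | h3
      · exfalso
        have h4 : ((m':k)+1) = 0 := by linear_combination -h3
        exact (Nat.cast_add_one_ne_zero m') (by push_cast at h4 ⊢; exact h4)
      · linear_combination h3
    · exact absurd h2 (hglt m' le_rfl)
  -- the submodule spanned by the string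
  set gg : Fin (m'+1) → V := fun i => g (i : ℕ) with hggdef
  set W : Submodule k V := Submodule.span k (Set.range gg) with hWdef
  have hgtail : ∀ i : ℕ, m' + 1 ≤ i → g i = 0 := by
    intro i hi
    obtain ⟨d, rfl⟩ := Nat.exists_eq_add_of_le hi
    induction d with
    | zero => simpa using hgm1
    | succ d ihd =>
        rw [show m' + 1 + (d+1) = (m' + 1 + d) + 1 by omega, hgsucc, ihd (by omega), map_zero]
  have hmemW : ∀ i : ℕ, g i ∈ W := by
    intro i
    by_cases hi : i ≤ m'
    · exact Submodule.subset_span ⟨⟨i, by omega⟩, rfl⟩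
    · rw [hgtail i (by omega)]; exact W.zero_mem
  have hWE : ∀ v ∈ W, E v ∈ W := by
    have hle : Submodule.map E W ≤ W := by
      rw [hWdef, Submodule.map_span]
      apply Submodule.span_le.mpr
      rintro _ ⟨_, ⟨i, rfl⟩, rfl⟩
      rw [show E (gg i) = g ((i:ℕ)+1) from (hgsucc (i:ℕ)).symm]
      exact hmemW _
    exact fun v hv => hle (Submodule.mem_map_of_mem hv)
  have hWF : ∀ v ∈ W, F v ∈ W := by
    have hle : Submodule.map F W ≤ W := by
      rw [hWdef, Submodule.map_span]
      apply Submodule.span_le.mpr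
      rintro _ ⟨_, ⟨i, rfl⟩, rfl⟩
      rcases hiv : (i : ℕ) with _ | jj
      · rw [show F (gg i) = F (g (i:ℕ)) from rfl, hiv, hg0, hFu']
        exact W.zero_mem
      · rw [show F (gg i) = F (g ((i:ℕ))) from rfl, hiv, hgF jj]
        exact W.smul_mem _ (hmemW jj)
    exact fun v hv => hle (Submodule.mem_map_of_mem hv)
  have hWH : ∀ v ∈ W, H v ∈ W := by
    have hle : Submodule.map H W ≤ W := by
      rw [hWdef, Submodule.map_span]
      apply Submodule.span_le.mpr
      rintro _ ⟨_, ⟨i, rfl⟩, rfl⟩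
      rw [show H (gg i) = H (g (i:ℕ)) from rfl, hgH (i:ℕ)]
      exact W.smul_mem _ (hmemW _)
    exact fun v hv => hle (Submodule.mem_map_of_mem hv)
  have hWbot : W ≠ ⊥ := by
    apply Submodule.ne_bot_iff _ |>.mpr
    refine ⟨u', ?_, hu'0⟩
    rw [← hg0]; exact hmemW 0
  -- pass to the quotient and use the induction hypothesis
  have hWEle : W ≤ W.comap E := fun v hv => hWE v hv
  have hWFle : W ≤ W.comap F := fun v hv => hWF v hv
  have hWHle : W ≤ W.comap H := fun v hv => hWH v hv
  set Eb : Module.End k (V ⧸ W) := W.mapQ W E hWEle with hEbdef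
  set Fb : Module.End k (V ⧸ W) := W.mapQ W F hWFle with hFbdef
  set Hb : Module.End k (V ⧸ W) := W.mapQ W H hWHle with hHbdef
  have hqE : ∀ v : V, Eb (W.mkQ v) = W.mkQ (E v) := fun v => rfl
  have hqF : ∀ v : V, Fb (W.mkQ v) = W.mkQ (F v) := fun v => rfl
  have hqH : ∀ v : V, Hb (W.mkQ v) = W.mkQ (H v) := fun v => rfl
  have hEb : Hb * Eb - Eb * Hb = Eb + Eb := by
    apply LinearMap.ext
    intro q
    obtain ⟨v, rfl⟩ := W.mkQ_surjective q
    simp only [LinearMap.sub_apply, LinearMap.add_apply, Module.End.mul_apply, hqE, hqH]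
    rw [← map_sub, ← map_add]
    congr 1
    have := congrArg (fun (L : Module.End k V) => L v) hE
    simpa using this
  have hFb : Hb * Fb - Fb * Hb = -(Fb + Fb) := by
    apply LinearMap.ext
    intro q
    obtain ⟨v, rfl⟩ := W.mkQ_surjective q
    simp only [LinearMap.sub_apply, LinearMap.add_apply, Module.End.mul_apply,
      LinearMap.neg_apply, hqF, hqH]
    rw [← map_sub, ← map_add, ← map_neg]
    congr 1
    have := congrArg (fun (L : Module.End k V) => L v) hF
    simpa using this
  have hHb : Eb * Fb - Fb * Eb = Hb := by
    apply LinearMap.ext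
    intro q
    obtain ⟨v, rfl⟩ := W.mkQ_surjective q
    simp only [LinearMap.sub_apply, Module.End.mul_apply, hqE, hqF, hqH]
    rw [← map_sub]
    congr 1
    have := congrArg (fun (L : Module.End k V) => L v) hH
    simpa using this
  have hlt : finrank k (V ⧸ W) < n := by
    have h1 := Submodule.finrank_quotient_add_finrank W
    have h2 : finrank k W ≠ 0 := fun hcon2 => hWbot (Submodule.finrank_eq_zero.mp hcon2)
    omega
  have hzW : z ∈ W := by
    have h0 := ih (finrank k (V ⧸ W)) hlt (V ⧸ W) rfl Eb Fb Hb hEb hFb hHb (W.mkQ z)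
      (by rw [hqF, hzker, map_zero])
      ⟨W.mkQ x, by rw [hqE, hEx]⟩
    exact (Submodule.Quotient.mk_eq_zero W).mp h0
  -- decompose z in the string basis
  have hliF : LinearIndependent k gg := by
    have hinj2 : Function.Injective (fun i : Fin (m'+1) => μi K + 2 * ((i:ℕ):k)) := by
      intro a b hab
      simp only at hab
      have h3 : (((a:ℕ)):k) = ((b:ℕ):k) := by
        have h4 : (2:k) * (a:ℕ) = 2 * (b:ℕ) := by linear_combination hab
        exact mul_left_cancel₀ two_ne_zero h4
      exact Fin.ext (Nat.cast_injective h3)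
    exact Module.End.eigenvectors_linearIndependent' H _ hinj2 gg
      (fun i => Module.End.hasEigenvector_iff.mpr
        ⟨Module.End.mem_eigenspace_iff.mpr (hgH (i:ℕ)), hglt (i:ℕ) (by omega)⟩)
  rw [hWdef, mem_span_range_iff_exists_fun] at hzW
  obtain ⟨co, hco⟩ := hzW
  have happly : ∑ i : Fin (m'+1), ((μi K + 2 * ((i:ℕ):k) - l0) * co i) • gg i = 0 := by
    have h2 : ∀ i : Fin (m'+1),
        ((μi K + 2 * ((i:ℕ):k) - l0) * co i) • gg i
          = co i • (H (gg i)) - l0 • (co i • gg i) := by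
      intro i
      rw [show H (gg i) = H (g (i:ℕ)) from rfl, hgH (i:ℕ)]
      rw [smul_smul, smul_smul, ← sub_smul]
      congr 1
      ring
    rw [Finset.sum_congr rfl (fun i _ => h2 i), Finset.sum_sub_distrib]
    have h3 : ∑ i : Fin (m'+1), co i • H (gg i) = H z := by
      rw [← hco, map_sum]
      exact Finset.sum_congr rfl (fun i _ => (map_smul H (co i) (gg i)).symm)
    have h4 : ∑ i : Fin (m'+1), l0 • (co i • gg i) = l0 • z := by
      rw [← hco, Finset.smul_sum]
    rw [h3, h4, hzH, sub_self]
  have hcoef0 : ∀ i : Fin (m'+1), (μi K + 2 * ((i:ℕ):k) - l0) * co i = 0 := by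
    have := linearIndependent_iff'.mp hliF Finset.univ _ happly
    exact fun i => this i (Finset.mem_univ i)
  have hex1 : ∃ i : Fin (m'+1), co i ≠ 0 := by
    by_contra hall
    push_neg at hall
    apply hz0
    rw [← hco]
    simp [hall]
  obtain ⟨i₁, hi₁0⟩ := hex1
  have hval : μi K + 2 * ((i₁:ℕ):k) = l0 := by
    have h2 := hcoef0 i₁
    rcases mul_eq_zero.mp h2 with h3 | h3
    · linear_combination h3
    · exact absurd h3 hi₁0
  have hi₁K : (i₁ : ℕ) = K + 1 := by
    have h2 : (((i₁:ℕ)):k) = ((K+1 : ℕ):k) := by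
      have h4 : (2:k) * ((i₁:ℕ):k) = 2 * ((K+1:ℕ):k) := by
        simp only [hμidef] at hval
        push_cast
        linear_combination hval
      exact mul_left_cancel₀ two_ne_zero h4
    exact Nat.cast_injective h2
  have hK1m : K + 1 ≤ m' := by
    have := i₁.isLt
    omega
  have hzeq : z = co i₁ • gg i₁ := by
    rw [← hco]
    apply Finset.sum_eq_single i₁
    · intro b _ hb
      have h2 := hcoef0 b
      rcases mul_eq_zero.mp h2 with h3 | h3
      · exfalso
        apply hb
        have h4 : ((b:ℕ):k) = ((i₁:ℕ):k) := by
          have h5 : (2:k) * ((b:ℕ):k) = 2 * ((i₁:ℕ):k) := by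
            linear_combination h3 - hval
          exact mul_left_cancel₀ two_ne_zero h5
        exact Fin.ext (Nat.cast_injective h4)
      · rw [h3, zero_smul]
    · intro hcon2
      exact absurd (Finset.mem_univ i₁) hcon2
  -- final contradiction : F z ≠ 0
  have hggK : gg i₁ = g (K+1) := by
    rw [hggdef]
    simp only
    rw [hi₁K]
  have hFz : F z = co i₁ • ((-((K:k)+1)) * (μi K + K)) • g K := by
    rw [hzeq, map_smul, hggK, hgF K]
  rw [hzker] at hFz
  have hcoefne : (-((K:k)+1)) * (μi K + K) ≠ 0 := by
    apply mul_ne_zero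
    · intro h3
      have h4 : ((K:k)+1) = 0 := by linear_combination -h3
      exact (Nat.cast_add_one_ne_zero K) (by push_cast; exact h4)
    · rw [hμK]
      intro h3
      have h4 : ((K:ℕ):k) = ((m':ℕ):k) := by linear_combination h3
      have h5 : K = m' := Nat.cast_injective h4
      omega
  have := smul_eq_zero.mp hFz.symm
  rcases this with h2 | h2
  · exact hi₁0 h2
  · rcases smul_eq_zero.mp h2 with h3 | h3
    · exact hcoefne h3
    · exact hglt K (by omega) h3

lemma sl2aux_disjoint {K : Type u} [Field K] [CharZero K]
    {V : Type v} [AddCommGroup V] [Module K V] [FiniteDimensional K V]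
    (E F H : Module.End K V)
    (hE : H * E - E * H = E + E) (hF : H * F - F * H = -(F + F)) (hH : E * F - F * E = H) :
    ∀ z : V, F z = 0 → z ∈ LinearMap.range E → z = 0 := by
  intro z hzF hzE
  let A := AlgebraicClosure K
  haveI : CharZero A := charZero_of_injective_algebraMap (algebraMap K A).injective
  let φ : Module.End K V →+* Module.End A (TensorProduct K A V) :=
    (Module.End.baseChangeHom K A V).toRingHom
  have hφ : ∀ G : Module.End K V, φ G = G.baseChange A := fun G => rfl
  have hE' : (φ H) * (φ E) - (φ E) * (φ H) = (φ E) + (φ E) := by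
    rw [← map_mul, ← map_mul, ← map_sub φ, ← map_add φ, hE]
  have hF' : (φ H) * (φ F) - (φ F) * (φ H) = -((φ F) + (φ F)) := by
    rw [← map_mul, ← map_mul, ← map_sub φ, ← map_add φ, ← map_neg φ, hF]
  have hH' : (φ E) * (φ F) - (φ F) * (φ E) = φ H := by
    rw [← map_mul, ← map_mul, ← map_sub φ, hH]
  obtain ⟨u, hu⟩ := hzE
  have h0 : (1:A) ⊗ₜ[K] z = 0 := by
    refine sl2aux_core (finrank A (TensorProduct K A V)) (TensorProduct K A V) rfl (φ E) (φ F) (φ H) hE' hF' hH'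
      ((1:A) ⊗ₜ[K] z) ?_ ?_
    · rw [hφ, LinearMap.baseChange_tmul, hzF, TensorProduct.tmul_zero]
    · exact ⟨(1:A) ⊗ₜ[K] u, by rw [hφ, LinearMap.baseChange_tmul, hu]⟩
  -- injectivity of v ↦ 1 ⊗ v
  let ψ : V →ₗ[K] TensorProduct K A V :=
    (LinearMap.rTensor V (Algebra.linearMap K A)) ∘ₗ
      ((TensorProduct.lid K V).symm.toLinearMap : V →ₗ[K] TensorProduct K K V)
  have hψ : ∀ v : V, ψ v = (1:A) ⊗ₜ[K] v := by
    intro v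
    show (LinearMap.rTensor V (Algebra.linearMap K A)) ((TensorProduct.lid K V).symm v)
      = (1:A) ⊗ₜ[K] v
    rw [TensorProduct.lid_symm_apply, LinearMap.rTensor_tmul, Algebra.linearMap_apply, map_one]
  have hinj : Function.Injective ψ :=
    (Module.Flat.rTensor_preserves_injective_linearMap _ (algebraMap K A).injective).comp
      (TensorProduct.lid K V).symm.injective
  have : ψ z = ψ 0 := by rw [hψ, map_zero, h0]
  exact hinj this


/-- For an `sl₂`-triple `(e, h, f)` in a finite-dimensional Lie algebra over
a field of characteristic zero, one has `g = ker(ad f) ⊕ image(ad e)`, i.e.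
`g = g_f ⊕ [e, g]`. -/
theorem stmt12 (K L : Type*) [Field K] [CharZero K] [LieRing L] [LieAlgebra K L]
    [FiniteDimensional K L]
    (e h f : L)
    (hhe : ⁅h, e⁆ = (2 : K) • e) (hhf : ⁅h, f⁆ = (-2 : K) • f) (hef : ⁅e, f⁆ = h) :
    IsCompl (LinearMap.ker ((LieAlgebra.ad K L f) : L →ₗ[K] L))
      (LinearMap.range ((LieAlgebra.ad K L e) : L →ₗ[K] L)) := by
  set E : Module.End K L := (LieAlgebra.ad K L e : L →ₗ[K] L) with hEdef
  set F : Module.End K L := (LieAlgebra.ad K L f : L →ₗ[K] L) with hFdef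
  set H : Module.End K L := (LieAlgebra.ad K L h : L →ₗ[K] L) with hHdef
  have hadE : ∀ x : L, E x = ⁅e, x⁆ := fun x => rfl
  have hadF : ∀ x : L, F x = ⁅f, x⁆ := fun x => rfl
  have hadH : ∀ x : L, H x = ⁅h, x⁆ := fun x => rfl
  have hE : H * E - E * H = E + E := by
    ext x
    simp only [LinearMap.sub_apply, LinearMap.add_apply, Module.End.mul_apply, hadE, hadH]
    rw [← lie_lie, hhe, smul_lie, two_smul]
  have hF : H * F - F * H = -(F + F) := by
    ext x
    simp only [LinearMap.sub_apply, LinearMap.add_apply, Module.End.mul_apply,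
      LinearMap.neg_apply, hadF, hadH]
    rw [← lie_lie, hhf, smul_lie, neg_smul, two_smul]
  have hH : E * F - F * E = H := by
    ext x
    simp only [LinearMap.sub_apply, Module.End.mul_apply, hadE, hadF, hadH]
    rw [← lie_lie, hef]
  have hE₂ : (-H) * F - F * (-H) = F + F := by
    have h2 : (-H) * F - F * (-H) = -(H * F - F * H) := by rw [neg_mul, mul_neg]; abel
    rw [h2, hF, neg_neg]
  have hF₂ : (-H) * E - E * (-H) = -(E + E) := by
    have h2 : (-H) * E - E * (-H) = -(H * E - E * H) := by rw [neg_mul, mul_neg]; abel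
    rw [h2, hE]
  have hH₂ : F * E - E * F = -H := by rw [← hH]; abel
  have hd1 := sl2aux_disjoint E F H hE hF hH
  have hd2 := sl2aux_disjoint F E (-H) hE₂ hF₂ hH₂
  have hdisj : Disjoint (LinearMap.ker F) (LinearMap.range E) := by
    rw [Submodule.disjoint_def]
    intro v hv1 hv2
    exact hd1 v (LinearMap.mem_ker.mp hv1) hv2
  have hdisj2 : Disjoint (LinearMap.ker E) (LinearMap.range F) := by
    rw [Submodule.disjoint_def]
    intro v hv1 hv2
    exact hd2 v (LinearMap.mem_ker.mp hv1) hv2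
  -- rank counting
  have hrn1 : finrank K (LinearMap.range F) + finrank K (LinearMap.ker F) = finrank K L :=
    LinearMap.finrank_range_add_finrank_ker F
  have hrn2 : finrank K (LinearMap.range E) + finrank K (LinearMap.ker E) = finrank K L :=
    LinearMap.finrank_range_add_finrank_ker E
  have hsup1 : finrank K ↥(LinearMap.ker F ⊔ LinearMap.range E)
      = finrank K (LinearMap.ker F) + finrank K (LinearMap.range E) := by
    have := Submodule.finrank_sup_add_finrank_inf_eq (LinearMap.ker F) (LinearMap.range E)
    rw [hdisj.eq_bot, finrank_bot, add_zero] at this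
    exact this
  have hsup2 : finrank K ↥(LinearMap.ker E ⊔ LinearMap.range F)
      = finrank K (LinearMap.ker E) + finrank K (LinearMap.range F) := by
    have := Submodule.finrank_sup_add_finrank_inf_eq (LinearMap.ker E) (LinearMap.range F)
    rw [hdisj2.eq_bot, finrank_bot, add_zero] at this
    exact this
  have hle1 : finrank K ↥(LinearMap.ker F ⊔ LinearMap.range E) ≤ finrank K L :=
    Submodule.finrank_le _
  have hle2 : finrank K ↥(LinearMap.ker E ⊔ LinearMap.range F) ≤ finrank K L :=
    Submodule.finrank_le _
  have htop : finrank K ↥(LinearMap.ker F ⊔ LinearMap.range E) = finrank K L := by omega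
  refine ⟨hdisj, codisjoint_iff.mpr ?_⟩
  exact Submodule.eq_top_of_finrank_eq htop
end

section
/- Let g be a finite-dimensional Lie algebra over a field with a nondegenerate, symmetric, invariant bilinear form B, let x ∈ g, and let W ⊆ g be a subspace with g = W ⊕ [g, x]. Then for every n ≥ 1, the set {(y₁, …, y_n) ∈ gⁿ : y₁ + ⋯ + y_n ∈ W^⊥, and [x, y₁] = ⋯ = [x, y_n] with this common value lying in W} equals {(y₁, …, y_n) ∈ (g_x)ⁿ : y₁ + ⋯ + y_n = 0}. -/
/-- With `B` a nondegenerate symmetric invariant bilinear form, `x ∈ g`, and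
`W` a complement to `[g, x]`, for every `n ≥ 1` the set of tuples `(y₁, …, y_n)` with
`y₁ + ⋯ + y_n ∈ W^⊥` and `[x, y₁] = ⋯ = [x, y_n]` lying in `W` equals the set of tuples
in `(g_x)ⁿ` summing to zero. -/
theorem stmt14 (K L : Type*) [Field K] [LieRing L] [LieAlgebra K L] [FiniteDimensional K L]
    (B : L →ₗ[K] L →ₗ[K] K)
    (hsymm : ∀ a b : L, B a b = B b a)
    (hinv : ∀ a b c : L, B ⁅a, b⁆ c = B a ⁅b, c⁆)
    (hnd : ∀ a : L, (∀ b : L, B a b = 0) → a = 0)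
    (x : L) (W J : Submodule K L)
    (hJ : (J : Set L) = {w : L | ∃ z : L, w = ⁅z, x⁆})
    (hcompl : IsCompl W J)
    (n : ℕ) (hn : 1 ≤ n) :
    {y : Fin n → L | (∀ w ∈ W, B (∑ i, y i) w = 0) ∧
        (∀ i j : Fin n, ⁅x, y i⁆ = ⁅x, y j⁆) ∧ (∀ i : Fin n, ⁅x, y i⁆ ∈ W)} =
      {y : Fin n → L | (∀ i : Fin n, ⁅x, y i⁆ = 0) ∧ ∑ i, y i = 0} := by
  ext y
  simp only [Set.mem_setOf_eq]
  constructor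
  · rintro ⟨horth, _, hW⟩
    have hbr : ∀ i : Fin n, ⁅x, y i⁆ = 0 := by
      intro i
      have hJi : ⁅x, y i⁆ ∈ J := by
        rw [← SetLike.mem_coe, hJ]
        exact ⟨-(y i), by rw [neg_lie, lie_skew]⟩
      have := hcompl.inf_eq_bot
      have : ⁅x, y i⁆ ∈ W ⊓ J := ⟨hW i, hJi⟩
      rw [hcompl.inf_eq_bot] at this
      exact this
    refine ⟨hbr, ?_⟩
    set s := ∑ i, y i with hs
    have hxs : ⁅x, s⁆ = 0 := by
      rw [hs, ← LieAlgebra.ad_apply (R := K), map_sum]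
      simp only [LieAlgebra.ad_apply]
      exact Finset.sum_eq_zero fun i _ => hbr i
    apply hnd
    intro b
    have hb : b ∈ W ⊔ J := by rw [hcompl.sup_eq_top]; trivial
    obtain ⟨w, hw, j, hj, rfl⟩ := Submodule.mem_sup.mp hb
    obtain ⟨z, rfl⟩ : ∃ z : L, j = ⁅z, x⁆ := by
      have := hj; rw [← SetLike.mem_coe, hJ] at this; exact this
    rw [map_add, horth w hw, zero_add, hsymm, hinv, hxs, map_zero]
  · rintro ⟨hbr, hsum⟩
    refine ⟨?_, ?_, ?_⟩
    · intro w _; rw [hsum, map_zero, LinearMap.zero_apply]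
    · intro i j; rw [hbr i, hbr j]
    · intro i; rw [hbr i]; exact W.zero_mem
end
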